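/- Parameter formulas at a nilpotent (Bogdanov–Takens) equilibrium (used in Theorems 2.5(II) and 3.1): fix x* > 0 and suppose F(x*) = 0, F′(x*) = 0 and p(x*) = 0, where F(x) = x·(r·(1 − x/k) − m/(x+b)) − q·n·x²/(x² + c·x + a) and p(x) = n·q·x·(x² − a)/(a + c·x + x²)² − b·m/(b + x)² − 2·r·x/k + r − s. Then n = s·(a + x*·(c + x*))/(q·x*), and if moreover b − k + 2x* ≠ 0, then r = −k·s·(a·(b + 2x*) + x*²·(c − b)) / (x*·(a + x*·(c + x*))·(b − k + 2x*)) and m = −s·(b + x*)²·(a·k + x*²·(c − k + 2x*)) / (x*·(a + x*·(c + x*))·(b − k + 2x*)). -/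

import Mathlib

/-!
With `D x = x² + c x + a`, differentiating gives
`F′ x = r - 2 r x / k - b m / (b + x)² - q n x (c x + 2 a) / D x ²`, and since
`(x² - a) + (c x + 2 a) = D x` the trace is `p x = F′ x + n q x / D x - s`. So `p x* = F′ x* = 0`
forces `n q x* = s D x*`, which is the formula for `n`. Substituting it into `F x* = 0` and
`F′ x* = 0` leaves a linear system in `r` and `m` whose determinant is a nonzero multiple of
`x* (b - k + 2 x*)`. Finally `D x* > 0` because `D x = (x - √a)² + (c + 2√a) x`.
-/

open Real

lemma quadratic_pos_of_neg_two_sqrt_lt {a c x : ℝ} (ha : 0 ≤ a) (hc : -2 * √a < c) (hx : 0 < x) :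
    0 < x ^ 2 + c * x + a := by
  nlinarith [sq_nonneg (x - √a), sq_sqrt ha, mul_pos (by linarith : 0 < c + 2 * √a) hx]

lemma hasDerivAt_sq_div_quadratic {a c x : ℝ} (hD : x ^ 2 + c * x + a ≠ 0) :
    HasDerivAt (fun y => y ^ 2 / (y ^ 2 + c * y + a))
      (x * (c * x + 2 * a) / (x ^ 2 + c * x + a) ^ 2) x := by
  have hsq : HasDerivAt (fun y : ℝ => y ^ 2) (2 * x) x := by simpa using hasDerivAt_pow 2 x
  have hden : HasDerivAt (fun y => y ^ 2 + c * y + a) (2 * x + c) x := by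
    simpa using (hsq.add ((hasDerivAt_id' x).const_mul c)).add_const a
  exact (hsq.div hden hD).congr_deriv (by ring)

lemma hasDerivAt_mul_logistic_sub_div {r k m b x : ℝ} (hb : x + b ≠ 0) :
    HasDerivAt (fun y => y * (r * (1 - y / k) - m / (y + b)))
      (r - 2 * r * x / k - b * m / (b + x) ^ 2) x := by
  have hG : HasDerivAt (fun y => r * (1 - y / k) - m / (y + b))
      (r * -(1 / k) - (0 * (x + b) - m * 1) / (x + b) ^ 2) x :=
    ((((hasDerivAt_id' x).div_const k).const_sub 1).const_mul r).sub
      ((hasDerivAt_const x m).div ((hasDerivAt_id' x).add_const b) hb)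
  refine ((hasDerivAt_id' x).mul hG).congr_deriv ?_
  rw [add_comm b x]
  field_simp
  ring

lemma hasDerivAt_logistic_sub_div_sub_sq_div {r k m b q n c a x : ℝ} (hb : x + b ≠ 0)
    (hD : x ^ 2 + c * x + a ≠ 0) :
    HasDerivAt (fun y => y * (r * (1 - y / k) - m / (y + b)) - q * n * y ^ 2 / (y ^ 2 + c * y + a))
      (r - 2 * r * x / k - b * m / (b + x) ^ 2 -
        q * n * (x * (c * x + 2 * a) / (x ^ 2 + c * x + a) ^ 2)) x := by
  simp only [mul_div_assoc (q * n)]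
  exact (hasDerivAt_mul_logistic_sub_div hb).sub ((hasDerivAt_sq_div_quadratic hD).const_mul _)

lemma mul_eq_mul_quadratic_of_trace_eq_zero {r k m b q n c a s x : ℝ} (hD : x ^ 2 + c * x + a ≠ 0)
    (htrace : n * q * x * (x ^ 2 - a) / (a + c * x + x ^ 2) ^ 2 - b * m / (b + x) ^ 2 -
      2 * r * x / k + r - s = 0)
    (hderiv : r - 2 * r * x / k - b * m / (b + x) ^ 2 -
      q * n * (x * (c * x + 2 * a) / (x ^ 2 + c * x + a) ^ 2) = 0) :
    n * q * x = s * (x ^ 2 + c * x + a) := by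
  rw [show a + c * x + x ^ 2 = x ^ 2 + c * x + a by ring,
    show x ^ 2 - a = (x ^ 2 + c * x + a) - (c * x + 2 * a) by ring] at htrace
  generalize x ^ 2 + c * x + a = D at *
  field_simp at htrace hderiv
  refine mul_left_cancel₀ hD ?_
  linear_combination htrace - hderiv

lemma rates_eq_of_equilibrium {r k m b s a c x : ℝ} (hk : k ≠ 0) (hx : x ≠ 0) (hb : x + b ≠ 0)
    (hD : x ^ 2 + c * x + a ≠ 0) (hdet : b - k + 2 * x ≠ 0)
    (hF : r * (1 - x / k) - m / (x + b) = s)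
    (hF' : r - 2 * r * x / k - b * m / (b + x) ^ 2 = s * (c * x + 2 * a) / (x ^ 2 + c * x + a)) :
    r = -(k * s * (a * (b + 2 * x) + x ^ 2 * (c - b))) /
        (x * (a + x * (c + x)) * (b - k + 2 * x)) ∧
      m = -(s * (b + x) ^ 2 * (a * k + x ^ 2 * (c - k + 2 * x))) /
        (x * (a + x * (c + x)) * (b - k + 2 * x)) := by
  rw [eq_div_iff hD, add_comm b x] at hF'
  field_simp at hF hF'
  have hden : x * (a + x * (c + x)) * (b - k + 2 * x) ≠ 0 := by
    refine mul_ne_zero (mul_ne_zero hx ?_) hdet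
    contrapose! hD
    linear_combination hD
  have hr : r * (x * (a + x * (c + x)) * (b - k + 2 * x)) =
      -(k * s * (a * (b + 2 * x) + x ^ 2 * (c - b))) := by
    refine mul_right_cancel₀ hb ?_
    linear_combination -hF' + b * (x ^ 2 + c * x + a) * hF
  refine ⟨(eq_div_iff hden).2 hr, (eq_div_iff hden).2 (mul_right_cancel₀ hk ?_)⟩
  linear_combination -(x * (x ^ 2 + c * x + a) * (b - k + 2 * x)) * hF + (k - x) * (x + b) * hr

theorem parameters_at_nilpotent_equilibrium_general
    (r s k q a n m b c : ℝ)
    (hk : 0 < k) (hq : 0 < q) (ha : 0 < a)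
    (hb : 0 < b) (hc : -2 * Real.sqrt a < c)
    (F p : ℝ → ℝ)
    (hF : F = fun x => x * (r * (1 - x / k) - m / (x + b)) -
        q * n * x ^ 2 / (x ^ 2 + c * x + a))
    (hp : p = fun x => n * q * x * (x ^ 2 - a) / (a + c * x + x ^ 2) ^ 2 -
        b * m / (b + x) ^ 2 - 2 * r * x / k + r - s)
    (xs : ℝ) (hxs : 0 < xs)
    (hFeq : F xs = 0) (hF' : deriv F xs = 0) (hpeq : p xs = 0) :
    n = s * (a + xs * (c + xs)) / (q * xs) ∧
      (b - k + 2 * xs ≠ 0 →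
        r = -(k * s * (a * (b + 2 * xs) + xs ^ 2 * (c - b))) /
            (xs * (a + xs * (c + xs)) * (b - k + 2 * xs)) ∧
          m = -(s * (b + xs) ^ 2 * (a * k + xs ^ 2 * (c - k + 2 * xs))) /
            (xs * (a + xs * (c + xs)) * (b - k + 2 * xs))) := by
  subst hF hp
  beta_reduce at hFeq hpeq
  have hD := (quadratic_pos_of_neg_two_sqrt_lt ha.le hc hxs).ne'
  have hB : xs + b ≠ 0 := by positivity
  rw [(hasDerivAt_logistic_sub_div_sub_sq_div hB hD).deriv] at hF'
  have hnq := mul_eq_mul_quadratic_of_trace_eq_zero hD hpeq hF'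
  refine ⟨by rw [eq_div_iff (by positivity)]; linear_combination hnq, fun hdet => ?_⟩
  refine rates_eq_of_equilibrium hk.ne' hxs.ne' hB hD hdet ?_ ?_
  · have hpredation : q * n * xs ^ 2 / (xs ^ 2 + c * xs + a) = xs * s := by
      rw [div_eq_iff hD]; linear_combination xs * hnq
    exact mul_left_cancel₀ hxs.ne' (by linarith)
  · have hpredation : q * n * (xs * (c * xs + 2 * a) / (xs ^ 2 + c * xs + a) ^ 2) =
        s * (c * xs + 2 * a) / (xs ^ 2 + c * xs + a) := by
      generalize xs ^ 2 + c * xs + a = D at hD hnq ⊢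
      field_simp
      linear_combination (c * xs + 2 * a) * hnq
    linarith

/-- Parameter formulas at a nilpotent (Bogdanov–Takens) equilibrium: if
`F(x*) = F′(x*) = p(x*) = 0`, then `n = s·(a + x*·(c + x*))/(q·x*)`, and if moreover
`b - k + 2x* ≠ 0`, then `r` and `m` are given by the stated formulas. -/
theorem parameters_at_nilpotent_equilibrium
    (r s k q a n m b c : ℝ)
    (hr : 0 < r) (hs : 0 < s) (hk : 0 < k) (hq : 0 < q) (ha : 0 < a)
    (hn : 0 < n) (hm : 0 < m) (hb : 0 < b) (hc : -2 * Real.sqrt a < c)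
    (F p : ℝ → ℝ)
    (hF : F = fun x => x * (r * (1 - x / k) - m / (x + b)) -
        q * n * x ^ 2 / (x ^ 2 + c * x + a))
    (hp : p = fun x => n * q * x * (x ^ 2 - a) / (a + c * x + x ^ 2) ^ 2 -
        b * m / (b + x) ^ 2 - 2 * r * x / k + r - s)
    (xs : ℝ) (hxs : 0 < xs)
    (hFeq : F xs = 0) (hF' : deriv F xs = 0) (hpeq : p xs = 0) :
    n = s * (a + xs * (c + xs)) / (q * xs) ∧
      (b - k + 2 * xs ≠ 0 →
        r = -(k * s * (a * (b + 2 * xs) + xs ^ 2 * (c - b))) /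
            (xs * (a + xs * (c + xs)) * (b - k + 2 * xs)) ∧
          m = -(s * (b + xs) ^ 2 * (a * k + xs ^ 2 * (c - k + 2 * xs))) /
            (xs * (a + xs * (c + xs)) * (b - k + 2 * xs))) :=
  parameters_at_nilpotent_equilibrium_general r s k q a n m b c hk hq ha hb hc F p hF hp xs hxs hFeq
    hF' hpeq
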